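/- arXiv:1905.12891 — 4 statements merged into one kernel-verified Lean document; each statement's English description precedes it below -/
import Mathlib

section
/- The distribution law B12 holds: for all A B C : Bool × Bool, i³(i(A)·i(B))·C = i³(i(A·C)·i(B·C)), where i³ denotes i applied three times and · is juxtaposition. -/
def bfi : Bool × Bool → Bool × Bool := fun p => (!p.2, p.1)

def juxt : Bool × Bool → Bool × Bool → Bool × Bool :=
  fun a b => (a.1 || b.1, a.2 || b.2)

theorem b12 (A B C : Bool × Bool) :
    juxt (bfi^[3] (juxt (bfi A) (bfi B))) C =
      bfi^[3] (juxt (bfi (juxt A C)) (bfi (juxt B C))) := by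
  obtain ⟨a1,a2⟩ := A; obtain ⟨b1,b2⟩ := B; obtain ⟨c1,c2⟩ := C
  simp [bfi, juxt, Function.iterate_succ, Function.comp]
  cases a1 <;> cases a2 <;> cases b1 <;> cases b2 <;> cases c1 <;> cases c2 <;> simp
end

section
/- The BF expression cross(i(A)·i³(unmarked)) · cross(i³(A)·i(unmarked)) equals the swap (a₂, a₁) of A = (a₁,a₂); i.e., this expression realizes the Belnap negation ¬ of the bilattice FOUR. -/
def cross : Bool × Bool → Bool × Bool := fun p => (!p.1, !p.2)

def unmarked : Bool × Bool := (false, false)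

theorem belnap_neg (a₁ a₂ : Bool) :
    juxt (cross (juxt (bfi (a₁, a₂)) (bfi^[3] unmarked)))
         (cross (juxt (bfi^[3] (a₁, a₂)) (bfi unmarked))) = (a₂, a₁) := by simp [bfi, juxt, cross, unmarked]
end

section
/- The BF expression cross(i(A)·i(unmarked)) · cross(i³(A)·i³(unmarked)) applied to A = (a₁,a₂) equals (¬a₂, ¬a₁); i.e., it realizes the conflation operation ! of the bilattice FOUR. -/
theorem conflation_expr (a₁ a₂ : Bool) :
    juxt (cross (juxt (bfi (a₁, a₂)) (bfi unmarked)))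
         (cross (juxt (bfi^[3] (a₁, a₂)) (bfi^[3] unmarked))) = (!a₂, !a₁) := by cases a₁ <;> cases a₂ <;> rfl
end

section
/- The BF expression A ∨ B := i(i³(A)·i³(B)) computes the least upper bound in the truth ordering of Belnap's FOUR: with values as pairs (f,t) of Booleans ordered by (f₁,t₁) ≤ₜ (f₂,t₂) iff f₂ → f₁ and t₁ → t₂ (falseness decreases, truth increases), A ∨ B is the join of A and B in ≤ₜ. -/
def bfOr (A B : Bool × Bool) : Bool × Bool := bfi (juxt (bfi^[3] A) (bfi^[3] B))

def leT (A B : Bool × Bool) : Prop := (B.1 → A.1) ∧ (A.2 → B.2)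

theorem bfOr_is_join (A B : Bool × Bool) :
    leT A (bfOr A B) ∧ leT B (bfOr A B) ∧
      ∀ C : Bool × Bool, leT A C → leT B C → leT (bfOr A B) C := by
  obtain ⟨a1, a2⟩ := A; obtain ⟨b1, b2⟩ := B
  refine ⟨?_, ?_, fun ⟨c1, c2⟩ h1 h2 => ?_⟩ <;>
    simp_all [bfOr, bfi, juxt, leT, Function.iterate_succ, Function.comp] <;>
    revert a1 a2 b1 b2 c1 c2 <;> decide
end
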